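/- arXiv:1812.11819 — 2 statements merged into one kernel-verified Lean document; each statement's English description precedes it below -/
import Mathlib

section
/- Let S be a linear contraction on a Banach space B. Then for every x in B and every natural number n, ‖e^{n(S−I)}x − Sⁿx‖ ≤ √n · ‖Sx − x‖, where e^{n(S−I)} = e^{−n} ∑_{k≥0} nᵏSᵏ/k!. -/
/-!
Writing `e^{n(S-I)} = ∑ₖ pₖ Sᵏ` with the Poisson(n) weights `pₖ = e^{-n} nᵏ / k!`, the difference
`e^{n(S-I)}x - Sⁿx` is the average of `Sᵏx - Sⁿx` against a Poisson(n) variable `K`. Since `S` is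
non-expansive, `‖Sᵏx - Sⁿx‖ ≤ |k - n| ‖Sx - x‖`, so the error is at most `E|K - n| · ‖Sx - x‖`, and
`E|K - n| ≤ √(Var K) = √n` by Cauchy–Schwarz.
-/

open Finset
open scoped Nat

theorem LipschitzWith.dist_iterate_le {α : Type*} [PseudoMetricSpace α] {f : α → α}
    (hf : LipschitzWith 1 f) (x : α) (m n : ℕ) :
    dist (f^[m] x) (f^[n] x) ≤ |(m : ℝ) - n| * dist x (f x) := by
  wlog hmn : m ≤ n generalizing m n
  · rw [dist_comm, abs_sub_comm]
    exact this n m (le_of_not_ge hmn)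
  have hstep (i : ℕ) : dist (f^[i] x) (f^[i + 1] x) ≤ dist x (f x) := by
    rw [Function.iterate_succ_apply]
    simpa using (hf.iterate i).dist_le_mul x (f x)
  calc dist (f^[m] x) (f^[n] x)
      ≤ ∑ i ∈ Ico m n, dist (f^[i] x) (f^[i + 1] x) := dist_le_Ico_sum_dist (f^[·] x) hmn
    _ ≤ ∑ _i ∈ Ico m n, dist x (f x) := sum_le_sum fun i _ => hstep i
    _ = |(m : ℝ) - n| * dist x (f x) := by
      rw [sum_const, Nat.card_Ico, nsmul_eq_mul, abs_sub_comm, Nat.cast_sub hmn,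
        abs_of_nonneg (sub_nonneg.mpr (Nat.cast_le.mpr hmn))]

section ProbabilityWeights

variable {ι : Type*} {w f : ι → ℝ} {v : ℝ}

theorem sum_abs_mul_le_sqrt_of_hasSum_sq_mul (hw : ∀ i, 0 ≤ w i) (hw1 : HasSum w 1)
    (hv : HasSum (fun i => f i ^ 2 * w i) v) (s : Finset ι) :
    ∑ i ∈ s, |f i| * w i ≤ √v := by
  have hfw (i : ι) : 0 ≤ f i ^ 2 * w i := mul_nonneg (sq_nonneg _) (hw i)
  refine (le_abs_self _).trans (Real.abs_le_sqrt ?_)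
  calc (∑ i ∈ s, |f i| * w i) ^ 2 ≤ (∑ i ∈ s, w i) * ∑ i ∈ s, f i ^ 2 * w i :=
        sum_sq_le_sum_mul_sum_of_sq_le_mul s (fun i _ => hw i) (fun i _ => hfw i)
          fun i _ => le_of_eq (by rw [mul_pow, sq_abs]; ring)
    _ ≤ 1 * v := by
      gcongr
      · exact sum_nonneg fun i _ => hfw i
      · exact sum_le_hasSum s (fun i _ => hw i) hw1
      · exact sum_le_hasSum s (fun i _ => hfw i) hv
    _ = v := one_mul v

theorem summable_abs_mul_of_hasSum_sq_mul (hw : ∀ i, 0 ≤ w i) (hw1 : HasSum w 1)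
    (hv : HasSum (fun i => f i ^ 2 * w i) v) : Summable fun i => |f i| * w i :=
  summable_of_sum_le (fun i => mul_nonneg (abs_nonneg _) (hw i))
    (sum_abs_mul_le_sqrt_of_hasSum_sq_mul hw hw1 hv)

theorem tsum_abs_mul_le_sqrt_of_hasSum_sq_mul (hw : ∀ i, 0 ≤ w i) (hw1 : HasSum w 1)
    (hv : HasSum (fun i => f i ^ 2 * w i) v) : ∑' i, |f i| * w i ≤ √v :=
  Real.tsum_le_of_sum_le (fun i => mul_nonneg (abs_nonneg _) (hw i))
    (sum_abs_mul_le_sqrt_of_hasSum_sq_mul hw hw1 hv)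

end ProbabilityWeights

noncomputable def poissonWeight (a : ℝ) (k : ℕ) : ℝ := Real.exp (-a) * a ^ k / k !

theorem poissonWeight_nonneg {a : ℝ} (ha : 0 ≤ a) (k : ℕ) : 0 ≤ poissonWeight a k := by
  unfold poissonWeight; positivity

theorem hasSum_poissonWeight (a : ℝ) : HasSum (poissonWeight a) 1 := by
  have h := (NormedSpace.expSeries_div_hasSum_exp a).mul_left (Real.exp (-a))
  rw [← Real.exp_eq_exp_ℝ, ← Real.exp_add, neg_add_cancel, Real.exp_zero] at h
  simp only [← mul_div_assoc] at h
  exact h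

theorem succ_mul_poissonWeight_succ (a : ℝ) (k : ℕ) :
    (k + 1) * poissonWeight a (k + 1) = a * poissonWeight a k := by
  simp only [poissonWeight, Nat.factorial_succ, Nat.cast_mul, Nat.cast_succ, pow_succ]
  field_simp

/-- Stein's identity `E[K g(K)] = a E[g(K + 1)]` for `K ~ Poisson(a)`. -/
theorem hasSum_natCast_mul_mul_poissonWeight {a s : ℝ} {g : ℕ → ℝ}
    (h : HasSum (fun k => g (k + 1) * poissonWeight a k) s) :
    HasSum (fun k : ℕ => k * g k * poissonWeight a k) (a * s) := by
  rw [← hasSum_nat_add_iff' 1, range_one, sum_singleton, Nat.cast_zero, zero_mul, zero_mul,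
    sub_zero]
  refine (h.mul_left a).congr_fun fun k => ?_
  push_cast
  linear_combination g (k + 1) * succ_mul_poissonWeight_succ a k

theorem hasSum_natCast_mul_poissonWeight (a : ℝ) :
    HasSum (fun k : ℕ => k * poissonWeight a k) a := by
  simpa using hasSum_natCast_mul_mul_poissonWeight (g := fun _ => 1) (s := 1)
    (by simpa using hasSum_poissonWeight a)

theorem hasSum_sub_sq_mul_poissonWeight (a : ℝ) :
    HasSum (fun k : ℕ => ((k : ℝ) - a) ^ 2 * poissonWeight a k) a := by
  have hmean := hasSum_natCast_mul_poissonWeight a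
  have hsecond : HasSum (fun k : ℕ => k * k * poissonWeight a k) (a * (a + 1)) :=
    hasSum_natCast_mul_mul_poissonWeight
      (by simpa [add_mul] using hmean.add (hasSum_poissonWeight a))
  have h := (hsecond.sub (hmean.mul_left (2 * a))).add ((hasSum_poissonWeight a).mul_left (a ^ 2))
  rw [show a * (a + 1) - 2 * a * a + a ^ 2 * 1 = a by ring] at h
  exact h.congr_fun fun k => by ring

theorem hasSum_poissonWeight_smul_pow {𝔸 : Type*} [NormedRing 𝔸] [NormedAlgebra ℝ 𝔸]
    [CompleteSpace 𝔸] (a : ℝ) (T : 𝔸) :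
    HasSum (fun k => poissonWeight a k • T ^ k) (NormedSpace.exp (a • (T - 1))) := by
  let +nondep : NormedAlgebra ℚ 𝔸 := .restrictScalars ℚ ℝ 𝔸
  have hsplit : a • (T - 1) = algebraMap ℝ 𝔸 (-a) + a • T := by
    rw [Algebra.algebraMap_eq_smul_one]; module
  rw [hsplit, NormedSpace.exp_add_of_commute (Algebra.commute_algebraMap_left _ _),
    ← NormedSpace.algebraMap_exp_comm, ← Real.exp_eq_exp_ℝ, ← Algebra.smul_def]
  refine ((NormedSpace.exp_series_hasSum_exp' (𝕂 := ℝ) (a • T)).const_smul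
    (Real.exp (-a))).congr_fun fun k => ?_
  rw [smul_pow, smul_smul, smul_smul, poissonWeight]
  congr 1
  field_simp

/-- Chernoff's √n-lemma: for a linear contraction `S` on a Banach space `B`,
`‖e^{n(S-I)}x - Sⁿx‖ ≤ √n ‖Sx - x‖` for all `x` and `n`. -/
theorem chernoff_sqrt_lemma {B : Type*} [NormedAddCommGroup B] [NormedSpace ℝ B]
    [CompleteSpace B] (S : B →L[ℝ] B) (hS : ‖S‖ ≤ 1) (x : B) (n : ℕ) :
    ‖NormedSpace.exp ((n : ℝ) • (S - 1)) x - (S ^ n) x‖ ≤ Real.sqrt n * ‖S x - x‖ := by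
  have hexp : HasSum (fun k => poissonWeight n k • (S ^ k) x)
      (NormedSpace.exp ((n : ℝ) • (S - 1)) x) :=
    (hasSum_poissonWeight_smul_pow (n : ℝ) S).mapL (ContinuousLinearMap.apply ℝ B x)
  have hdiff := hexp.sub ((hasSum_poissonWeight n).smul_const ((S ^ n) x))
  rw [one_smul] at hdiff
  have hlip : LipschitzWith 1 S := S.lipschitz.weaken (by exact_mod_cast hS)
  have hw := poissonWeight_nonneg (Nat.cast_nonneg (α := ℝ) n)
  have hvar := hasSum_sub_sq_mul_poissonWeight n
  have hdev := (summable_abs_mul_of_hasSum_sq_mul hw (hasSum_poissonWeight n) hvar).hasSum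
  calc ‖NormedSpace.exp ((n : ℝ) • (S - 1)) x - (S ^ n) x‖
      ≤ (∑' k : ℕ, |(k : ℝ) - n| * poissonWeight n k) * ‖S x - x‖ := by
        refine hdiff.norm_le_of_bounded (hdev.mul_right _) fun k => ?_
        rw [← smul_sub, norm_smul, Real.norm_of_nonneg (hw k), ← dist_eq_norm, ← dist_eq_norm',
          FunLike.coe_pow_eq_iterate, FunLike.coe_pow_eq_iterate, mul_comm _ (poissonWeight _ _),
          mul_assoc]
        exact mul_le_mul_of_nonneg_left (hlip.dist_iterate_le x k n) (hw k)
    _ ≤ √n * ‖S x - x‖ := by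
        gcongr
        exact tsum_abs_mul_le_sqrt_of_hasSum_sq_mul hw (hasSum_poissonWeight n) hvar
end

section
/- Let u₁, u₂ be unitary operators on a Hilbert space H with u = u₁u₂, let x be a bounded operator generating the uniformly continuous contraction semigroup e^{tx}, and set V_t = u₁ e^{(t/2)x} u₁* · u e^{(t/2)x} u*, Πy = u y u*. Assume the Cesàro means of Πᵏ(·) converge on the relevant elements, with limit projection P onto the commutant of u. Then the strong derivative of P(V_t) at t = 0 equals A = (1/2) P(u₁ x u₁* + u x u*), and (u₁ e^{(t/n)x} u₂ e^{(t/n)x})^{n/2} (u*)^{n/2} → e^{tA} strongly as n → ∞ (along even n). -/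
open Filter Topology ContinuousLinearMap

variable {H : Type*} [NormedAddCommGroup H] [InnerProductSpace ℂ H] [CompleteSpace H]

/-- Conjugation `y ↦ w y w*` on `B(H)`. -/
noncomputable def conjBy (w : H →L[ℂ] H) (y : H →L[ℂ] H) : H →L[ℂ] H :=
  w ∘L y ∘L adjoint w

/-!
Since `u₁ e^w u₂ e^w = V u` with `V = (u₁ e^w u₁⋆)(u e^w u⋆)` and `u = u₁ u₂`, the recentred
product `(u₁ e^w u₂ e^w)^m (u⋆)^m` is the ordered product `V · Π V ⋯ Π^(m-1) V`, where `Π` is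
conjugation by `u`, a unital isometry. For `w = (t / 2m) x` we have `V = 1 + (t/m) B + O(m⁻²)`
with `B = ½ (u₁ x u₁⋆ + u x u⋆)`, and `A = P B`. Telescoping against `E = exp ((t/m) A)` writes
the error as `∑ Lⱼ (Πʲ V - E) E^(m-1-j)`. Its first-order part `(t/m)(Πʲ B - A)` is the
increment of `σⱼ = ∑_{k<j} Πᵏ B - j A`, which is `o(j)` by the ergodic hypothesis, and summation
by parts bounds its contribution by `‖σₘ‖/m + m⁻² ∑_{j≤m} ‖σⱼ‖ → 0`. The derivative is the chain
rule, `P` being a bounded linear map by Banach–Steinhaus.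
-/

open Finset Asymptotics
open NormedSpace (exp)

namespace NormedSpace

variable {𝔸 : Type*} [NormedRing 𝔸] [NormedAlgebra ℚ 𝔸] [CompleteSpace 𝔸]

theorem norm_exp_sub_sum_range_le (h1 : ‖(1 : 𝔸)‖ ≤ 1) (z : 𝔸) (k : ℕ) :
    ‖exp z - ∑ i ∈ range k, (i.factorial⁻¹ : ℚ) • z ^ i‖ ≤ ‖z‖ ^ k * Real.exp ‖z‖ := by
  have htail : HasSum (fun n => ((n + k).factorial⁻¹ : ℚ) • z ^ (n + k))
      (exp z - ∑ i ∈ range k, (i.factorial⁻¹ : ℚ) • z ^ i) :=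
    (hasSum_nat_add_iff' k).2 (exp_series_hasSum_exp' z)
  have hmajorant : HasSum (fun n => ‖z‖ ^ k * (‖z‖ ^ n / n.factorial))
      (‖z‖ ^ k * Real.exp ‖z‖) := by
    simpa [Real.exp_eq_exp_ℝ] using (expSeries_div_hasSum_exp (𝔸 := ℝ) ‖z‖).mul_left (‖z‖ ^ k)
  refine htail.norm_le_of_bounded hmajorant fun n => ?_
  have hpow : ‖z ^ (n + k)‖ ≤ ‖z‖ ^ (n + k) := by
    rcases Nat.eq_zero_or_pos (n + k) with h0 | hpos
    · simpa [h0] using h1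
    · exact norm_pow_le' z hpos
  have hfact : (n.factorial : ℝ) ≤ (n + k).factorial := by
    exact_mod_cast Nat.factorial_le (Nat.le_add_right n k)
  calc ‖((n + k).factorial⁻¹ : ℚ) • z ^ (n + k)‖
      ≤ ((n + k).factorial : ℝ)⁻¹ * ‖z‖ ^ (n + k) := by
        rw [norm_smul, norm_inv, ← Rat.norm_cast_real, Rat.cast_natCast, Real.norm_natCast]
        gcongr
    _ ≤ (n.factorial : ℝ)⁻¹ * ‖z‖ ^ (n + k) := by gcongr
    _ = ‖z‖ ^ k * (‖z‖ ^ n / n.factorial) := by ring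

theorem norm_exp_le (h1 : ‖(1 : 𝔸)‖ ≤ 1) (z : 𝔸) : ‖exp z‖ ≤ Real.exp ‖z‖ := by
  simpa using norm_exp_sub_sum_range_le h1 z 0

theorem norm_exp_sub_one_le (h1 : ‖(1 : 𝔸)‖ ≤ 1) (z : 𝔸) :
    ‖exp z - 1‖ ≤ ‖z‖ * Real.exp ‖z‖ := by
  simpa using norm_exp_sub_sum_range_le h1 z 1

theorem norm_exp_sub_one_sub_le (h1 : ‖(1 : 𝔸)‖ ≤ 1) (z : 𝔸) :
    ‖exp z - 1 - z‖ ≤ ‖z‖ ^ 2 * Real.exp ‖z‖ := by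
  simpa [sum_range_succ, sub_sub] using norm_exp_sub_sum_range_le h1 z 2

theorem norm_exp_pow_le (h1 : ‖(1 : 𝔸)‖ ≤ 1) (z : 𝔸) (k : ℕ) :
    ‖exp z ^ k‖ ≤ Real.exp (k * ‖z‖) := by
  rw [← exp_nsmul]
  exact (norm_exp_le h1 _).trans (Real.exp_le_exp.2 norm_nsmul_le)

end NormedSpace

section RingIdentities

variable {R : Type*} [Ring R]

theorem prod_map_range_sub_pow_eq_sum (a : ℕ → R) (E : R) (m : ℕ) :
    ((List.range m).map a).prod - E ^ m =
      ∑ j ∈ range m, ((List.range j).map a).prod * (a j - E) * E ^ (m - 1 - j) := by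
  have hterm : ∀ j ∈ range m, ((List.range j).map a).prod * (a j - E) * E ^ (m - 1 - j) =
      ((List.range (j + 1)).map a).prod * E ^ (m - (j + 1)) -
        ((List.range j).map a).prod * E ^ (m - j) := by
    intro j hj
    rw [List.prod_range_succ, show m - j = m - 1 - j + 1 by grind,
      show m - (j + 1) = m - 1 - j by grind, pow_succ']
    noncomm_ring
  rw [sum_congr rfl hterm, sum_range_sub (fun j => ((List.range j).map a).prod * E ^ (m - j))]
  simp

theorem sum_range_by_parts_mul_pow (L σ : ℕ → R) (E : R) (hσ : σ 0 = 0) (m : ℕ) :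
    ∑ j ∈ range m, L j * (σ (j + 1) - σ j) * E ^ (m - 1 - j) =
      L m * σ m + ∑ j ∈ range m,
        ((L j - L (j + 1)) * σ (j + 1) - L j * σ j * (1 - E)) * E ^ (m - 1 - j) := by
  have hterm : ∀ j ∈ range m, L j * (σ (j + 1) - σ j) * E ^ (m - 1 - j) =
      (L (j + 1) * σ (j + 1) * E ^ (m - (j + 1)) - L j * σ j * E ^ (m - j)) +
        ((L j - L (j + 1)) * σ (j + 1) - L j * σ j * (1 - E)) * E ^ (m - 1 - j) := by
    intro j hj
    rw [show m - j = m - 1 - j + 1 by grind, show m - (j + 1) = m - 1 - j by grind, pow_succ']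
    noncomm_ring
  rw [sum_congr rfl hterm, sum_add_distrib, sum_range_sub (fun j => L j * σ j * E ^ (m - j))]
  simp [hσ]

end RingIdentities

section NormEstimates

variable {R : Type*} [NormedRing R]

theorem norm_prod_map_range_le_one (h1 : ‖(1 : R)‖ ≤ 1) {a : ℕ → R} (ha : ∀ j, ‖a j‖ ≤ 1)
    (m : ℕ) : ‖((List.range m).map a).prod‖ ≤ 1 := by
  induction m with
  | zero => simpa using h1
  | succ m ih =>
    rw [List.prod_range_succ]
    exact (norm_mul_le _ _).trans (mul_le_one₀ ih (norm_nonneg _) (ha m))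

theorem norm_sum_mul_pow_le {E : R} {C : ℝ} {m : ℕ} (hE : ∀ k < m, ‖E ^ k‖ ≤ C)
    {Y : ℕ → R} {y : ℕ → ℝ} (hY : ∀ j < m, ‖Y j‖ ≤ y j) :
    ‖∑ j ∈ range m, Y j * E ^ (m - 1 - j)‖ ≤ C * ∑ j ∈ range m, y j := by
  rw [mul_sum]
  refine (norm_sum_le _ _).trans (sum_le_sum fun j hj => ?_)
  rw [mem_range] at hj
  calc ‖Y j * E ^ (m - 1 - j)‖ ≤ ‖Y j‖ * ‖E ^ (m - 1 - j)‖ := norm_mul_le _ _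
    _ ≤ y j * C := mul_le_mul (hY j hj) (hE _ (by omega)) (norm_nonneg _)
        ((norm_nonneg _).trans (hY j hj))
    _ = C * y j := mul_comm _ _

variable {𝕜 : Type*} [RCLike 𝕜] [NormedAlgebra 𝕜 R]

theorem norm_prod_sub_pow_le {a σ : ℕ → R} {E : R} {c : 𝕜} {m : ℕ} {C ε η : ℝ}
    (hprod : ∀ j, ‖((List.range j).map a).prod‖ ≤ 1) (ha : ∀ j, ‖1 - a j‖ ≤ ε)
    (hE1 : ‖1 - E‖ ≤ ε) (hE : ∀ k < m, ‖E ^ k‖ ≤ C) (hσ : σ 0 = 0)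
    (hη : ∀ j, ‖a j - E - c • (σ (j + 1) - σ j)‖ ≤ η) :
    ‖((List.range m).map a).prod - E ^ m‖ ≤
      ‖c‖ * (‖σ m‖ + C * ε * ∑ j ∈ range m, (‖σ (j + 1)‖ + ‖σ j‖)) + C * (m * η) := by
  set L : ℕ → R := fun j => ((List.range j).map a).prod
  have hsplit : L m - E ^ m =
      c • ∑ j ∈ range m, L j * (σ (j + 1) - σ j) * E ^ (m - 1 - j) +
        ∑ j ∈ range m, L j * (a j - E - c • (σ (j + 1) - σ j)) * E ^ (m - 1 - j) := by
    rw [prod_map_range_sub_pow_eq_sum, smul_sum, ← sum_add_distrib]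
    refine sum_congr rfl fun j _ => ?_
    show L j * (a j - E) * _ = _
    simp only [mul_sub, sub_mul, mul_smul_comm, smul_mul_assoc]
    abel
  have hstep : ∀ j, ‖L j - L (j + 1)‖ ≤ ε := fun j => by
    calc ‖L j - L (j + 1)‖ = ‖L j * (1 - a j)‖ := by simp [L, List.prod_range_succ, mul_sub]
      _ ≤ 1 * ε := (norm_mul_le _ _).trans
          (mul_le_mul (hprod j) (ha j) (norm_nonneg _) zero_le_one)
      _ = ε := one_mul ε
  have hbyparts : ‖∑ j ∈ range m, L j * (σ (j + 1) - σ j) * E ^ (m - 1 - j)‖ ≤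
      ‖σ m‖ + C * ε * ∑ j ∈ range m, (‖σ (j + 1)‖ + ‖σ j‖) := by
    rw [sum_range_by_parts_mul_pow L σ E hσ, mul_assoc, mul_sum]
    refine (norm_add_le _ _).trans (add_le_add ?_ (norm_sum_mul_pow_le hE fun j _ => ?_))
    · have := mul_le_mul_of_nonneg_right (hprod m) (norm_nonneg (σ m))
      exact (norm_mul_le _ _).trans (by simpa using this)
    · calc ‖(L j - L (j + 1)) * σ (j + 1) - L j * σ j * (1 - E)‖
          ≤ ‖L j - L (j + 1)‖ * ‖σ (j + 1)‖ + ‖L j‖ * ‖σ j‖ * ‖1 - E‖ :=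
            (norm_sub_le _ _).trans (add_le_add (norm_mul_le _ _) ((norm_mul_le _ _).trans
              (mul_le_mul_of_nonneg_right (norm_mul_le _ _) (norm_nonneg _))))
        _ ≤ ε * ‖σ (j + 1)‖ + 1 * ‖σ j‖ * ε := by gcongr; exacts [hstep j, hprod j]
        _ = ε * (‖σ (j + 1)‖ + ‖σ j‖) := by ring
  have hrest : ‖∑ j ∈ range m, L j * (a j - E - c • (σ (j + 1) - σ j)) * E ^ (m - 1 - j)‖ ≤
      C * (m * η) := by
    simpa using norm_sum_mul_pow_le hE (y := fun _ => η) fun j _ => (norm_mul_le _ _).trans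
      (by simpa using mul_le_mul (hprod j) (hη j) (norm_nonneg _) zero_le_one)
  show ‖L m - E ^ m‖ ≤ _
  rw [hsplit]
  refine (norm_add_le _ _).trans (add_le_add ?_ hrest)
  rw [norm_smul]
  gcongr

end NormEstimates

section Contractions

variable {𝕜 E : Type*} [RCLike 𝕜] [NormedAddCommGroup E] [NormedSpace 𝕜 E]

theorem norm_div_natCast_smul (z : 𝕜) (m : ℕ) (y : E) : ‖(z / m) • y‖ = ‖z‖ * ‖y‖ / m := by
  rw [norm_smul, norm_div, RCLike.norm_natCast, div_mul_eq_mul_div]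

theorem norm_pow_apply_le {T : E →L[𝕜] E} (hT : ∀ y, ‖T y‖ ≤ ‖y‖) (k : ℕ) (y : E) :
    ‖(T ^ k) y‖ ≤ ‖y‖ := by
  induction k with
  | zero => simp
  | succ k ih => rw [pow_succ', mul_apply_eq_comp]; exact (hT _).trans ih

theorem tendsto_cesaro_pow_apply_of_succ {T : E →L[𝕜] E} (hT : ∀ y, ‖T y‖ ≤ ‖y‖) {y a : E}
    (h : Tendsto (fun n : ℕ => (n : 𝕜)⁻¹ • ∑ k ∈ range n, (T ^ (k + 1)) y) atTop (𝓝 a)) :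
    Tendsto (fun n : ℕ => (n : 𝕜)⁻¹ • ∑ k ∈ range n, (T ^ k) y) atTop (𝓝 a) := by
  have hsum : ∀ n, ∑ k ∈ range n, (T ^ k) y =
      ∑ k ∈ range n, (T ^ (k + 1)) y + (y - (T ^ n) y) := fun n => by
    have := sum_range_succ' (fun k => (T ^ k) y) n
    rw [sum_range_succ, pow_zero, one_apply_eq_self] at this
    rw [add_sub, ← this, add_sub_cancel_right]
  have hboundary : Tendsto (fun n : ℕ => (n : 𝕜)⁻¹ • (y - (T ^ n) y)) atTop (𝓝 0) := by
    refine squeeze_zero_norm (fun n => ?_) (tendsto_const_div_atTop_nhds_zero_nat (2 * ‖y‖))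
    rw [norm_smul, norm_inv, RCLike.norm_natCast, ← div_eq_inv_mul]
    gcongr
    linarith [norm_sub_le y ((T ^ n) y), norm_pow_apply_le hT n y]
  simpa only [add_zero, hsum, smul_add] using h.add hboundary

theorem isLittleO_norm_sum_range_sub_smul {b : ℕ → E} {A : E}
    (h : Tendsto (fun n : ℕ => (n : 𝕜)⁻¹ • ∑ k ∈ range n, b k) atTop (𝓝 A)) :
    (fun n : ℕ => ‖∑ k ∈ range n, b k - (n : 𝕜) • A‖) =o[atTop] fun n : ℕ => (n : ℝ) := by
  rw [isLittleO_iff_tendsto' (Eventually.of_forall fun n hn => by simp_all)]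
  have hmean : Tendsto (fun n : ℕ => (n : 𝕜)⁻¹ • ∑ k ∈ range n, b k - A) atTop (𝓝 0) := by
    simpa using h.sub_const A
  refine (hmean.norm.congr' ?_).trans (by simp)
  filter_upwards [eventually_ne_atTop 0] with n hn
  rw [div_eq_inv_mul, ← RCLike.norm_natCast (K := 𝕜), ← norm_inv, ← norm_smul, smul_sub,
    smul_smul, inv_mul_cancel₀ (by exact_mod_cast hn), one_smul]

end Contractions

theorem isLittleO_sum_range_sq {f : ℕ → ℝ} (hf : f =o[atTop] fun n : ℕ => (n : ℝ) + 1) :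
    (fun m : ℕ => ∑ j ∈ range m, f j) =o[atTop] fun m : ℕ => (m : ℝ) ^ 2 := by
  have hsum := hf.sum_range (fun n => by positivity) <| tendsto_atTop_mono (fun m : ℕ => by
    simpa using card_nsmul_le_sum (range m) (fun j : ℕ => (j : ℝ) + 1) 1 fun j _ => by simp)
    tendsto_natCast_atTop_atTop
  refine hsum.trans_isBigO (IsBigO.of_bound 1 (Eventually.of_forall fun m => ?_))
  rw [one_mul, Real.norm_of_nonneg (by positivity), Real.norm_of_nonneg (by positivity)]
  calc ∑ j ∈ range m, ((j : ℝ) + 1) ≤ ∑ _j ∈ range m, (m : ℝ) :=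
        sum_le_sum fun j hj => by have := mem_range.1 hj; exact_mod_cast this
    _ = (m : ℝ) ^ 2 := by simp [sq]

section ProductFormula

variable {𝕜 R : Type*} [RCLike 𝕜] [NormedRing R] [NormedAlgebra 𝕜 R]

theorem pow_apply_one_of_apply_one {T : R →L[𝕜] R} (hT1 : T 1 = 1) (k : ℕ) :
    (T ^ k) 1 = 1 := by
  rw [FunLike.coe_pow_eq_iterate]; exact Function.iterate_fixed hT1 k

variable [CompleteSpace R]

theorem norm_exp_div_smul_pow_le (h1 : ‖(1 : R)‖ ≤ 1) (z : 𝕜) (A : R) {m k : ℕ} (hk : k ≤ m) :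
    ‖exp ((z / m) • A) ^ k‖ ≤ Real.exp (‖z‖ * ‖A‖) := by
  let : NormedAlgebra ℚ R := .restrictScalars ℚ 𝕜 R
  refine (NormedSpace.norm_exp_pow_le h1 _ k).trans (Real.exp_le_exp.2 ?_)
  rw [norm_div_natCast_smul, mul_div_assoc']
  exact div_le_of_le_mul₀ (by positivity) (by positivity) (by rw [mul_comm]; gcongr)

theorem norm_one_sub_exp_div_smul_le (h1 : ‖(1 : R)‖ ≤ 1) (z : 𝕜) (A : R) {m : ℕ}
    (hm : m ≠ 0) : ‖1 - exp ((z / m) • A)‖ ≤ ‖z‖ * ‖A‖ * Real.exp (‖z‖ * ‖A‖) / m := by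
  let : NormedAlgebra ℚ R := .restrictScalars ℚ 𝕜 R
  rw [norm_sub_rev]
  refine (NormedSpace.norm_exp_sub_one_le h1 _).trans ?_
  rw [norm_div_natCast_smul, div_mul_eq_mul_div]
  gcongr
  exact div_le_self (by positivity) (by exact_mod_cast Nat.one_le_iff_ne_zero.2 hm)

theorem norm_exp_div_smul_sub_le (h1 : ‖(1 : R)‖ ≤ 1) (z : 𝕜) (A : R) {m : ℕ} (hm : m ≠ 0) :
    ‖exp ((z / m) • A) - 1 - (z / m) • A‖ ≤ (‖z‖ * ‖A‖) ^ 2 * Real.exp (‖z‖ * ‖A‖) / m ^ 2 := by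
  let : NormedAlgebra ℚ R := .restrictScalars ℚ 𝕜 R
  refine (NormedSpace.norm_exp_sub_one_sub_le h1 _).trans ?_
  rw [norm_div_natCast_smul, div_pow, div_mul_eq_mul_div]
  gcongr
  exact div_le_self (by positivity) (by exact_mod_cast Nat.one_le_iff_ne_zero.2 hm)

theorem norm_prod_pow_apply_sub_exp_le (h1 : ‖(1 : R)‖ ≤ 1) {T : R →L[𝕜] R}
    (hT : ∀ y, ‖T y‖ ≤ ‖y‖) (hT1 : T 1 = 1) {A B V : R} {σ : ℕ → R} (hσ0 : σ 0 = 0)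
    (hσ : ∀ j, σ (j + 1) - σ j = (T ^ j) B - A) (hV : ‖V‖ ≤ 1) {z : 𝕜} {m : ℕ} (hm : m ≠ 0)
    {C K : ℝ} (hC : Real.exp (‖z‖ * ‖A‖) ≤ C) (hK : 0 ≤ K)
    (hVB : ‖V - 1 - (z / m) • B‖ ≤ K / m ^ 2) :
    ‖((List.range m).map fun k => (T ^ k) V).prod - exp (z • A)‖ ≤
      ‖z‖ / m * (‖σ m‖ + C * ((‖z‖ * ‖B‖ + K + ‖z‖ * ‖A‖ * C) / m) *
        ∑ j ∈ range m, (‖σ (j + 1)‖ + ‖σ j‖)) +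
      C * (m * ((K + (‖z‖ * ‖A‖) ^ 2 * C) / m ^ 2)) := by
  let : NormedAlgebra ℚ R := .restrictScalars ℚ 𝕜 R
  have hm1 : (1 : ℝ) ≤ m := by exact_mod_cast Nat.one_le_iff_ne_zero.2 hm
  have hKm : K / m ^ 2 ≤ K / m := div_le_div_of_nonneg_left hK (by positivity) (by nlinarith)
  have hzAC : ‖z‖ * ‖A‖ * Real.exp (‖z‖ * ‖A‖) / m ≤ ‖z‖ * ‖A‖ * C / m := by gcongr
  have ha : ∀ j, ‖1 - (T ^ j) V‖ ≤ (‖z‖ * ‖B‖ + K + ‖z‖ * ‖A‖ * C) / m := fun j => by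
    rw [← pow_apply_one_of_apply_one hT1 j, ← map_sub, ← norm_neg, ← map_neg, neg_sub]
    have hinsert := norm_le_insert' (V - 1) ((z / m) • B)
    rw [norm_div_natCast_smul] at hinsert
    have hAC : 0 ≤ ‖z‖ * ‖A‖ * C / m := (by positivity : (0 : ℝ) ≤ _).trans hzAC
    rw [add_div, add_div]
    linarith [norm_pow_apply_le hT j (V - 1)]
  have hE1 : ‖1 - exp ((z / m) • A)‖ ≤ (‖z‖ * ‖B‖ + K + ‖z‖ * ‖A‖ * C) / m := by
    refine (norm_one_sub_exp_div_smul_le h1 z A hm).trans (hzAC.trans ?_)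
    gcongr
    linarith [mul_nonneg (norm_nonneg z) (norm_nonneg B)]
  have hη : ∀ j, ‖(T ^ j) V - exp ((z / m) • A) - (z / m) • (σ (j + 1) - σ j)‖ ≤
      (K + (‖z‖ * ‖A‖) ^ 2 * C) / m ^ 2 := fun j => by
    have hsplit : (T ^ j) V - exp ((z / m) • A) - (z / m) • (σ (j + 1) - σ j) =
        (T ^ j) (V - 1 - (z / m) • B) - (exp ((z / m) • A) - 1 - (z / m) • A) := by
      rw [hσ, map_sub, map_sub, map_smul, pow_apply_one_of_apply_one hT1, smul_sub]; abel
    rw [hsplit, add_div]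
    refine (norm_sub_le _ _).trans (add_le_add ((norm_pow_apply_le hT j _).trans hVB)
      ((norm_exp_div_smul_sub_le h1 z A hm).trans ?_))
    gcongr
  have hEm : exp ((z / m) • A) ^ m = exp (z • A) := by
    rw [← NormedSpace.exp_nsmul, ← Nat.cast_smul_eq_nsmul 𝕜, smul_smul,
      mul_div_cancel₀ _ (by exact_mod_cast hm)]
  rw [← hEm]
  refine (norm_prod_sub_pow_le
    (norm_prod_map_range_le_one h1 fun j => (norm_pow_apply_le hT j V).trans hV) ha hE1
    (fun k hk => (norm_exp_div_smul_pow_le h1 z A hk.le).trans hC) hσ0 hη).trans_eq ?_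
  rw [norm_div, RCLike.norm_natCast]

theorem tendsto_prod_pow_apply_of_cesaro (h1 : ‖(1 : R)‖ ≤ 1) {T : R →L[𝕜] R}
    (hT : ∀ y, ‖T y‖ ≤ ‖y‖) (hT1 : T 1 = 1) {A B : R}
    (hB : Tendsto (fun n : ℕ => (n : 𝕜)⁻¹ • ∑ k ∈ range n, (T ^ k) B) atTop (𝓝 A))
    {V : ℕ → R} (hV : ∀ m, ‖V m‖ ≤ 1) (z : 𝕜)
    (hVB : (fun m : ℕ => V m - 1 - (z / m) • B) =O[atTop] fun m : ℕ => ((m : ℝ) ^ 2)⁻¹) :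
    Tendsto (fun m : ℕ => ((List.range m).map fun k => (T ^ k) (V m)).prod) atTop
      (𝓝 (exp (z • A))) := by
  set σ : ℕ → R := fun j => ∑ k ∈ range j, (T ^ k) B - (j : 𝕜) • A
  have hσ : ∀ j, σ (j + 1) - σ j = (T ^ j) B - A := fun j => by
    simp only [σ, sum_range_succ, Nat.cast_succ, add_smul, one_smul]; abel
  have hσo : (fun j : ℕ => ‖σ j‖) =o[atTop] fun j : ℕ => (j : ℝ) :=
    isLittleO_norm_sum_range_sub_smul hB
  have hσo' : (fun j : ℕ => ‖σ (j + 1)‖ + ‖σ j‖) =o[atTop] fun j : ℕ => (j : ℝ) + 1 := by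
    refine .add ?_ (hσo.trans_isBigO (.of_bound 1 (.of_forall fun j => ?_)))
    · simpa [Function.comp_def] using hσo.comp_tendsto (tendsto_add_atTop_nat 1)
    · simp [abs_of_nonneg (by positivity : (0 : ℝ) ≤ j + 1)]
  obtain ⟨K, hK, hVK⟩ := hVB.exists_nonneg
  set C := Real.exp (‖z‖ * ‖A‖)
  set K₁ := ‖z‖ * ‖B‖ + K + ‖z‖ * ‖A‖ * C
  set K₂ := K + (‖z‖ * ‖A‖) ^ 2 * C
  have hbound : ∀ᶠ m : ℕ in atTop,
      ‖((List.range m).map fun k => (T ^ k) (V m)).prod - exp (z • A)‖ ≤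
        ‖z‖ * (‖σ m‖ / m) + ‖z‖ * C * K₁ * ((∑ j ∈ range m, (‖σ (j + 1)‖ + ‖σ j‖)) / m ^ 2) +
          C * K₂ * (1 / m) := by
    filter_upwards [hVK.bound, eventually_ne_atTop 0] with m hVm hm
    refine (norm_prod_pow_apply_sub_exp_le h1 hT hT1 (by simp [σ]) hσ (hV m) hm le_rfl hK
      (by simpa [div_eq_mul_inv] using hVm)).trans_eq ?_
    simp only [C, K₁, K₂]
    field_simp
  have hlim := ((hσo.tendsto_div_nhds_zero.const_mul ‖z‖).add
    ((isLittleO_sum_range_sq hσo').tendsto_div_nhds_zero.const_mul (‖z‖ * C * K₁))).add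
    (tendsto_one_div_atTop_nhds_zero_nat.const_mul (C * K₂))
  simp only [mul_zero, add_zero] at hlim
  exact tendsto_iff_norm_sub_tendsto_zero.2
    (squeeze_zero' (.of_forall fun _ => norm_nonneg _) hbound hlim)

end ProductFormula

section TwoFactors

variable {𝕜 R : Type*} [RCLike 𝕜] [NormedRing R] [NormedAlgebra 𝕜 R] [CompleteSpace R]
variable {Φ₁ Φ₂ : R →L[𝕜] R}

theorem norm_map_exp_mul_map_exp_sub_le (h1 : ‖(1 : R)‖ ≤ 1) (hΦ₁ : ∀ y, ‖Φ₁ y‖ ≤ ‖y‖)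
    (hΦ₂ : ∀ y, ‖Φ₂ y‖ ≤ ‖y‖) (hΦ₁1 : Φ₁ 1 = 1) (hΦ₂1 : Φ₂ 1 = 1) (w : R) :
    ‖Φ₁ (exp w) * Φ₂ (exp w) - 1 - (Φ₁ w + Φ₂ w)‖ ≤ 3 * ‖w‖ ^ 2 * Real.exp (2 * ‖w‖) := by
  let : NormedAlgebra ℚ R := .restrictScalars ℚ 𝕜 R
  have hsplit : Φ₁ (exp w) * Φ₂ (exp w) - 1 - (Φ₁ w + Φ₂ w) =
      Φ₁ (exp w - 1) * Φ₂ (exp w - 1) + Φ₁ (exp w - 1 - w) + Φ₂ (exp w - 1 - w) := by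
    simp only [map_sub, hΦ₁1, hΦ₂1]; noncomm_ring
  have h₁ := NormedSpace.norm_exp_sub_one_le h1 w
  have h₂ := NormedSpace.norm_exp_sub_one_sub_le h1 w
  have he : 1 ≤ Real.exp ‖w‖ := Real.one_le_exp (norm_nonneg w)
  rw [hsplit, two_mul, Real.exp_add]
  calc _ ≤ ‖Φ₁ (exp w - 1)‖ * ‖Φ₂ (exp w - 1)‖ + ‖Φ₁ (exp w - 1 - w)‖ + ‖Φ₂ (exp w - 1 - w)‖ :=
        (norm_add_le _ _).trans (by gcongr; exact (norm_add_le _ _).trans (by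
          gcongr; exact norm_mul_le _ _))
    _ ≤ (‖w‖ * Real.exp ‖w‖) * (‖w‖ * Real.exp ‖w‖) + ‖w‖ ^ 2 * Real.exp ‖w‖ +
          ‖w‖ ^ 2 * Real.exp ‖w‖ := by
        gcongr
        exacts [(hΦ₁ _).trans h₁, (hΦ₂ _).trans h₁, (hΦ₁ _).trans h₂, (hΦ₂ _).trans h₂]
    _ ≤ _ := by
        nlinarith [mul_le_mul_of_nonneg_left he (by positivity : 0 ≤ ‖w‖ ^ 2 * Real.exp ‖w‖)]

theorem isBigO_map_exp_mul_map_exp_sub (h1 : ‖(1 : R)‖ ≤ 1) (hΦ₁ : ∀ y, ‖Φ₁ y‖ ≤ ‖y‖)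
    (hΦ₂ : ∀ y, ‖Φ₂ y‖ ≤ ‖y‖) (hΦ₁1 : Φ₁ 1 = 1) (hΦ₂1 : Φ₂ 1 = 1) (x : R) (z : 𝕜) :
    (fun m : ℕ => Φ₁ (exp ((z / m) • x)) * Φ₂ (exp ((z / m) • x)) - 1 - (z / m) • (Φ₁ x + Φ₂ x))
      =O[atTop] fun m : ℕ => ((m : ℝ) ^ 2)⁻¹ := by
  refine .of_bound (3 * (‖z‖ * ‖x‖) ^ 2 * Real.exp (2 * (‖z‖ * ‖x‖))) ?_
  filter_upwards [eventually_ne_atTop 0] with m hm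
  have hm1 : (1 : ℝ) ≤ m := by exact_mod_cast Nat.one_le_iff_ne_zero.2 hm
  rw [smul_add, ← map_smul, ← map_smul]
  refine (norm_map_exp_mul_map_exp_sub_le h1 hΦ₁ hΦ₂ hΦ₁1 hΦ₂1 _).trans ?_
  rw [norm_div_natCast_smul, norm_inv, norm_pow, Real.norm_natCast]
  calc 3 * (‖z‖ * ‖x‖ / m) ^ 2 * Real.exp (2 * (‖z‖ * ‖x‖ / m))
      ≤ 3 * (‖z‖ * ‖x‖ / m) ^ 2 * Real.exp (2 * (‖z‖ * ‖x‖)) := by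
        gcongr; exact div_le_self (by positivity) hm1
    _ = _ := by field_simp

theorem hasDerivAt_map_exp_smul_mul_map_exp_smul (hΦ₁1 : Φ₁ 1 = 1) (hΦ₂1 : Φ₂ 1 = 1) (x : R) :
    HasDerivAt (fun s : 𝕜 => Φ₁ (exp (s • x)) * Φ₂ (exp (s • x))) (Φ₁ x + Φ₂ x) 0 := by
  have hexp : HasDerivAt (fun s : 𝕜 => exp (s • x)) x 0 := by
    simpa using hasDerivAt_exp_smul_const (𝕂 := 𝕜) x 0
  convert (Φ₁.hasFDerivAt.comp_hasDerivAt 0 hexp).mul (Φ₂.hasFDerivAt.comp_hasDerivAt 0 hexp)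
    using 1
  · rfl
  · simp [hΦ₁1, hΦ₂1]

end TwoFactors

section UnitaryConjugation

theorem mul_pow_mul_pow_eq_prod {M : Type*} [Monoid M] {u v : M} (huv : u * v = 1)
    (hvu : v * u = 1) (V : M) (m : ℕ) :
    (V * u) ^ m * v ^ m = ((List.range m).map fun k => u ^ k * V * v ^ k).prod := by
  induction m with
  | zero => simp
  | succ m ih =>
    rw [List.prod_range_succ, ← ih]
    calc (V * u) ^ (m + 1) * v ^ (m + 1) = (V * u) ^ m * V * (u * v) * v ^ m := by
          simp only [pow_succ, pow_succ' v, mul_assoc]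
      _ = (V * u) ^ m * (v ^ m * u ^ m) * V * v ^ m := by
          rw [huv, pow_mul_pow_eq_one m hvu, mul_one, mul_one]
      _ = _ := by simp only [mul_assoc]

theorem mul_mul_mul_eq_conj_mul_conj_mul {M : Type*} [Monoid M] [StarMul M] {u₁ u₂ : M}
    (hu₁ : star u₁ * u₁ = 1) (hu₂ : star u₂ * u₂ = 1) (X Y : M) :
    u₁ * (X * (u₂ * Y)) = u₁ * X * star u₁ * (u₁ * u₂ * Y * star (u₁ * u₂)) * (u₁ * u₂) := by
  calc u₁ * (X * (u₂ * Y))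
      = u₁ * X * (star u₁ * u₁) * u₂ * Y * (star u₂ * (star u₁ * u₁) * u₂) := by
        simp only [hu₁, hu₂, mul_one, mul_assoc]
    _ = _ := by simp only [star_mul, mul_assoc]

variable (𝕜) {R : Type*} [RCLike 𝕜] [NormedRing R] [StarRing R] [NormedAlgebra 𝕜 R]

noncomputable def conjCLM (U : R) : R →L[𝕜] R := mulLeftRight 𝕜 R U (star U)

variable {𝕜}

@[simp]
theorem conjCLM_apply (U y : R) : conjCLM 𝕜 U y = U * y * star U := rfl

theorem conjCLM_pow (U : R) (k : ℕ) : conjCLM 𝕜 U ^ k = conjCLM 𝕜 (U ^ k) := by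
  induction k with
  | zero => ext; simp
  | succ k ih =>
    ext y
    rw [pow_succ', mul_apply_eq_comp, ih]
    simp only [conjCLM_apply, pow_succ' U k, star_mul, mul_assoc]

theorem conjCLM_apply_one {U : R} (hU : U ∈ unitary R) : conjCLM 𝕜 U 1 = 1 := by
  rw [conjCLM_apply, mul_one, Unitary.mul_star_self_of_mem hU]

theorem interspersed_pow_mul_star_pow_eq_prod {u₁ u₂ : R} (hu₁ : u₁ ∈ unitary R)
    (hu₂ : u₂ ∈ unitary R) (X Y : R) (m : ℕ) :
    (u₁ * (X * (u₂ * Y))) ^ m * star (u₁ * u₂) ^ m =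
      ((List.range m).map fun k =>
        (conjCLM 𝕜 (u₁ * u₂) ^ k) (conjCLM 𝕜 u₁ X * conjCLM 𝕜 (u₁ * u₂) Y)).prod := by
  have hu := mul_mem hu₁ hu₂
  simp only [conjCLM_pow, conjCLM_apply, star_pow]
  rw [mul_mul_mul_eq_conj_mul_conj_mul (Unitary.star_mul_self_of_mem hu₁)
    (Unitary.star_mul_self_of_mem hu₂), mul_pow_mul_pow_eq_prod
    (Unitary.mul_star_self_of_mem hu) (Unitary.star_mul_self_of_mem hu)]

variable [CStarRing R]

theorem CStarRing.norm_one_le : ‖(1 : R)‖ ≤ 1 := by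
  rcases subsingleton_or_nontrivial R with hR | hR
  · simp [Subsingleton.elim (1 : R) 0]
  · rw [CStarRing.norm_one]

theorem norm_conjCLM_apply {U : R} (hU : U ∈ unitary R) (y : R) : ‖conjCLM 𝕜 U y‖ = ‖y‖ := by
  rw [conjCLM_apply, CStarRing.norm_mul_mem_unitary _ (Unitary.star_mem hU),
    CStarRing.norm_mem_unitary_mul _ hU]

variable [CompleteSpace R]

theorem tendsto_interspersed_pow_mul_star_pow {u₁ u₂ : R} (hu₁ : u₁ ∈ unitary R)
    (hu₂ : u₂ ∈ unitary R) {x : R} (hx : ∀ s : ℝ, 0 ≤ s → ‖exp ((s : 𝕜) • x)‖ ≤ 1) {A : R}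
    (hA : Tendsto (fun n : ℕ => (n : 𝕜)⁻¹ • ∑ k ∈ range n, (conjCLM 𝕜 (u₁ * u₂) ^ k)
      ((2 : 𝕜)⁻¹ • (conjCLM 𝕜 u₁ x + conjCLM 𝕜 (u₁ * u₂) x))) atTop (𝓝 A))
    {t : ℝ} (ht : 0 ≤ t) :
    Tendsto (fun m : ℕ => (u₁ * (exp (((t : 𝕜) / (2 * m)) • x) *
        (u₂ * exp (((t : 𝕜) / (2 * m)) • x)))) ^ m * star (u₁ * u₂) ^ m)
      atTop (𝓝 (exp ((t : 𝕜) • A))) := by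
  have hu := mul_mem hu₁ hu₂
  set Φ := conjCLM 𝕜 u₁
  set T := conjCLM 𝕜 (u₁ * u₂)
  have hΦ : ∀ y, ‖Φ y‖ ≤ ‖y‖ := fun y => (norm_conjCLM_apply hu₁ y).le
  have hT : ∀ y, ‖T y‖ ≤ ‖y‖ := fun y => (norm_conjCLM_apply hu y).le
  set V : ℕ → R := fun m => Φ (exp (((t : 𝕜) / (2 * m)) • x)) * T (exp (((t : 𝕜) / (2 * m)) • x))
  have hV : ∀ m, ‖V m‖ ≤ 1 := fun m => by
    have hexp := hx (t / (2 * m)) (by positivity)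
    push_cast at hexp
    exact (norm_mul_le _ _).trans
      (mul_le_one₀ ((hΦ _).trans hexp) (norm_nonneg _) ((hT _).trans hexp))
  have hVB : (fun m : ℕ => V m - 1 - ((t : 𝕜) / m) • ((2 : 𝕜)⁻¹ • (Φ x + T x))) =O[atTop]
      fun m : ℕ => ((m : ℝ) ^ 2)⁻¹ := by
    refine (isBigO_map_exp_mul_map_exp_sub CStarRing.norm_one_le hΦ hT (conjCLM_apply_one hu₁)
      (conjCLM_apply_one hu) x ((t : 𝕜) / 2)).congr_left fun m => ?_
    simp only [V, div_div, smul_smul]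
    congr 2
    ring
  refine (tendsto_prod_pow_apply_of_cesaro CStarRing.norm_one_le hT (conjCLM_apply_one hu) hA hV
    (t : 𝕜) hVB).congr fun m => ?_
  exact (interspersed_pow_mul_star_pow_eq_prod hu₁ hu₂ _ _ m).symm

end UnitaryConjugation

theorem unitary_interspersed_product_formula_general
    (u₁ u₂ : H →L[ℂ] H)
    (h₁ : u₁ ∘L adjoint u₁ = 1) (h₁' : adjoint u₁ ∘L u₁ = 1)
    (h₂ : u₂ ∘L adjoint u₂ = 1) (h₂' : adjoint u₂ ∘L u₂ = 1)
    (x : H →L[ℂ] H)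
    (hcontr : ∀ s : ℝ, 0 ≤ s → ‖NormedSpace.exp ((s : ℂ) • x)‖ ≤ 1)
    (P : (H →L[ℂ] H) → (H →L[ℂ] H))
    (hP : ∀ y : H →L[ℂ] H,
      Tendsto (fun n : ℕ =>
          (n : ℂ)⁻¹ • ∑ k ∈ Finset.range n, (conjBy (u₁ ∘L u₂))^[k + 1] y)
        atTop (𝓝 (P y)))
    (t : ℝ) (ht : 0 < t) :
    HasDerivAt (fun s : ℝ => P
        (conjBy u₁ (NormedSpace.exp (((s : ℂ) / 2) • x)) ∘L
          conjBy (u₁ ∘L u₂) (NormedSpace.exp (((s : ℂ) / 2) • x))))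
      ((2 : ℂ)⁻¹ • P (conjBy u₁ x + conjBy (u₁ ∘L u₂) x)) 0 ∧
    ∀ f : H,
      Tendsto (fun m : ℕ =>
          ((((u₁ ∘L NormedSpace.exp (((t : ℂ) / (2 * m)) • x) ∘L
              u₂ ∘L NormedSpace.exp (((t : ℂ) / (2 * m)) • x)) ^ m) ∘L
            ((adjoint (u₁ ∘L u₂)) ^ m)) f))
        atTop
        (𝓝 (NormedSpace.exp
          ((t : ℂ) • ((2 : ℂ)⁻¹ • P (conjBy u₁ x + conjBy (u₁ ∘L u₂) x))) f)) := by
  have hu₁ : u₁ ∈ unitary (H →L[ℂ] H) := Unitary.mem_iff.2 ⟨h₁', h₁⟩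
  have hu₂ : u₂ ∈ unitary (H →L[ℂ] H) := Unitary.mem_iff.2 ⟨h₂', h₂⟩
  have hconj : conjBy = fun w : H →L[ℂ] H => ⇑(conjCLM ℂ w) := by
    ext w y : 2; exact (mul_assoc _ _ _).symm
  simp only [hconj] at hP ⊢
  have hT : ∀ y, ‖conjCLM ℂ (u₁ ∘L u₂) y‖ ≤ ‖y‖ := fun y =>
    (norm_conjCLM_apply (mul_mem hu₁ hu₂) y).le
  have hTP : ∀ y, Tendsto (fun n : ℕ => (n : ℂ)⁻¹ • ∑ k ∈ range n,
      (conjCLM ℂ (u₁ ∘L u₂) ^ (k + 1)) y) atTop (𝓝 (P y)) := by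
    simpa only [FunLike.coe_pow_eq_iterate] using hP
  obtain ⟨P, rfl⟩ : ∃ Pc : (H →L[ℂ] H) →L[ℂ] (H →L[ℂ] H), ⇑Pc = P :=
    ⟨continuousLinearMapOfTendsto (fun n : ℕ => (n : ℂ)⁻¹ • ∑ k ∈ range n,
      conjCLM ℂ (u₁ ∘L u₂) ^ (k + 1)) (tendsto_pi_nhds.2 fun y => (hTP y).congr fun n => by
        rw [smul_apply, _root_.sum_apply]), rfl⟩
  have hs : HasDerivAt (fun s : ℝ => (s : ℂ) / 2) 2⁻¹ 0 := by
    simpa using (hasDerivAt_id (0 : ℝ)).ofReal_comp.div_const 2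
  refine ⟨(P.hasFDerivAt.comp_hasDerivAt 0 (hasDerivAt_map_exp_smul_mul_map_exp_smul
    (conjCLM_apply_one hu₁) (conjCLM_apply_one (mul_mem hu₁ hu₂)) x)).scomp_of_eq 0 hs (by simp),
    fun f => ?_⟩
  rw [← map_smul]
  exact ((continuous_eval_const f).tendsto _).comp (tendsto_interspersed_pow_mul_star_pow hu₁ hu₂
    hcontr (tendsto_cesaro_pow_apply_of_succ hT (hTP _)) ht.le)

/-- Example 2.10 of the paper. `u₁, u₂` unitary, `u = u₁u₂ ≠ I`, `x` bounded generating
the contraction semigroup `e^{tx}`, `V_t = u₁e^{(t/2)x}u₁* · u e^{(t/2)x}u*`, `Πy = uyu*`,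
and `P` the mean-ergodic (Cesàro) limit of the iterates of `Π` (projecting onto the
commutant of `u`). Then the derivative of `P(V_t)` at `t = 0` is
`A = ½P(u₁xu₁* + uxu*)`, and `(u₁e^{(t/n)x}u₂e^{(t/n)x})^{n/2}(u*)^{n/2} → e^{tA}`
strongly along even `n` (below `n = 2m`). -/
theorem unitary_interspersed_product_formula
    (u₁ u₂ : H →L[ℂ] H)
    (h₁ : u₁ ∘L adjoint u₁ = 1) (h₁' : adjoint u₁ ∘L u₁ = 1)
    (h₂ : u₂ ∘L adjoint u₂ = 1) (h₂' : adjoint u₂ ∘L u₂ = 1)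
    (hne : u₁ ∘L u₂ ≠ 1)
    (x : H →L[ℂ] H)
    (hcontr : ∀ s : ℝ, 0 ≤ s → ‖NormedSpace.exp ((s : ℂ) • x)‖ ≤ 1)
    (P : (H →L[ℂ] H) → (H →L[ℂ] H))
    (hP : ∀ y : H →L[ℂ] H,
      Tendsto (fun n : ℕ =>
          (n : ℂ)⁻¹ • ∑ k ∈ Finset.range n, (conjBy (u₁ ∘L u₂))^[k + 1] y)
        atTop (𝓝 (P y)))
    (t : ℝ) (ht : 0 < t) :
    HasDerivAt (fun s : ℝ => P
        (conjBy u₁ (NormedSpace.exp (((s : ℂ) / 2) • x)) ∘L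
          conjBy (u₁ ∘L u₂) (NormedSpace.exp (((s : ℂ) / 2) • x))))
      ((2 : ℂ)⁻¹ • P (conjBy u₁ x + conjBy (u₁ ∘L u₂) x)) 0 ∧
    ∀ f : H,
      Tendsto (fun m : ℕ =>
          ((((u₁ ∘L NormedSpace.exp (((t : ℂ) / (2 * m)) • x) ∘L
              u₂ ∘L NormedSpace.exp (((t : ℂ) / (2 * m)) • x)) ^ m) ∘L
            ((adjoint (u₁ ∘L u₂)) ^ m)) f))
        atTop
        (𝓝 (NormedSpace.exp
          ((t : ℂ) • ((2 : ℂ)⁻¹ • P (conjBy u₁ x + conjBy (u₁ ∘L u₂) x))) f)) :=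
  unitary_interspersed_product_formula_general u₁ u₂ h₁ h₁' h₂ h₂' x hcontr P hP t ht
end
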